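/- For each integer k ≥ 2, let π(k) be the PageRank vector of Γ(k) for α = 1 − 1/k. Then π(k)_A → 0 as k → ∞. -/

import Mathlib

/-- Arc relation of the graph `Γ(k)` on vertex indices `0, ..., k+2`, where
vertex `0` is `C1`, vertex `1` is `C2`, vertex `i+1` is `B_i` for `1 ≤ i ≤ k`,
and vertex `k+2` is `A`.  `PRadj k j i` holds iff there is an arc from `j` to `i`. -/
def PRadj (k j i : ℕ) : Prop :=
  (j = 0 ∧ (i = 0 ∨ i = 1)) ∨
  (j = 1 ∧ (i = 0 ∨ i = 1 ∨ i = 2)) ∨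
  (2 ≤ j ∧ j ≤ k + 1 ∧ (i = 0 ∨ i = 1 ∨ i = j + 1)) ∨
  (j = k + 2 ∧ i = k + 2)

instance (k j i : ℕ) : Decidable (PRadj k j i) := by unfold PRadj; infer_instance

/-- Out-degree of vertex `j` in `Γ(k)`:  `deg(C1) = 2`, `deg(A) = 1`, all others `3`. -/
def PRdeg (k j : ℕ) : ℕ := if j = 0 then 2 else if j = k + 2 then 1 else 3

/-- The PageRank matrix `R_α` of `Γ(k)`:  entry `(i, j)` is
`α / deg(j) + (1 - α)/(k+3)` if there is an arc from `j` to `i`, and `(1 - α)/(k+3)`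
otherwise. -/
noncomputable def PRmat (k : ℕ) (α : ℝ) : Matrix (Fin (k + 3)) (Fin (k + 3)) ℝ :=
  fun i j =>
    if PRadj k j.1 i.1 then α / (PRdeg k j.1 : ℝ) + (1 - α) / ((k : ℝ) + 3)
    else (1 - α) / ((k : ℝ) + 3)

/-- `π` is a PageRank vector of `Γ(k)` for jumping parameter `α`:  it has nonnegative
entries summing to `1` and satisfies `R_α π = π`. -/
def IsPageRank (k : ℕ) (α : ℝ) (π : Fin (k + 3) → ℝ) : Prop :=
  (∀ v, 0 ≤ π v) ∧ (∑ v, π v = 1) ∧ (PRmat k α).mulVec π = π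

/-! Along the path `B₁ → ⋯ → B_k` each vertex receives only `α/3` of its predecessor's mass
plus the teleportation mass `t = (1 - α)/(k + 3)`, so `π(B_k) ≤ (α/3)^(k-1) + t/(1 - α/3)`.
The sink `A` keeps the fraction `α` of its own mass, so `(1 - α) π(A) = (α/3) π(B_k) + t`;
with `1 - α = 1/k` this gives `π(A) ≤ k 3⁻ᵏ + (3/2)/(k + 3) → 0`. -/

open Filter Finset

lemma le_pow_mul_add_div_of_le_mul_add {x : ℕ → ℝ} {a t : ℝ} {N : ℕ} (ha₀ : 0 ≤ a) (ha₁ : a < 1)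
    (ht : 0 ≤ t) (hx : ∀ m < N, x (m + 1) ≤ a * x m + t) :
    ∀ m ≤ N, x m ≤ a ^ m * x 0 + t / (1 - a) := by
  have h1a : 0 < 1 - a := by linarith
  intro m
  induction m with
  | zero => intro _; simp only [pow_zero, one_mul, le_add_iff_nonneg_right]; positivity
  | succ m ih =>
    intro hm
    calc x (m + 1) ≤ a * x m + t := hx m hm
      _ ≤ a * (a ^ m * x 0 + t / (1 - a)) + t := by gcongr; exact ih (by omega)
      _ = a ^ (m + 1) * x 0 + t / (1 - a) := by field_simp; ring

lemma PRmat_mulVec_apply (k : ℕ) (α : ℝ) (π : Fin (k + 3) → ℝ) (v : Fin (k + 3)) :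
    (PRmat k α).mulVec π v = ∑ j ∈ univ.filter (fun j : Fin (k + 3) => PRadj k j v),
      α / PRdeg k j * π j + (1 - α) / ((k : ℝ) + 3) * ∑ j, π j := by
  simp only [Matrix.mulVec, dotProduct, PRmat, sum_filter, mul_sum, ← sum_add_distrib]
  refine sum_congr rfl fun j _ => ?_
  split_ifs <;> ring

namespace IsPageRank

variable {k : ℕ} {α : ℝ} {π : Fin (k + 3) → ℝ}

lemma le_one (h : IsPageRank k α π) (v : Fin (k + 3)) : π v ≤ 1 :=
  h.2.1 ▸ single_le_sum (fun w _ => h.1 w) (mem_univ v)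

lemma apply_eq (h : IsPageRank k α π) (v : Fin (k + 3)) :
    π v = ∑ j ∈ univ.filter (fun j : Fin (k + 3) => PRadj k j v), α / PRdeg k j * π j
      + (1 - α) / ((k : ℝ) + 3) := by
  conv_lhs => rw [← h.2.2]
  rw [PRmat_mulVec_apply, h.2.1, mul_one]

lemma apply_succ_eq (h : IsPageRank k α π) {v : ℕ} (hv₂ : 2 ≤ v) (hvk : v ≤ k) :
    π ⟨v + 1, by omega⟩ = α / 3 * π ⟨v, by omega⟩ + (1 - α) / ((k : ℝ) + 3) := by
  have hin : univ.filter (fun j : Fin (k + 3) => PRadj k j (v + 1)) = {⟨v, by omega⟩} := by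
    ext j
    simp only [mem_filter, mem_univ, true_and, mem_singleton]
    simp only [PRadj, Fin.ext_iff]
    have := j.isLt; omega
  have hdeg : PRdeg k v = 3 := by simp only [PRdeg]; split_ifs <;> omega
  refine (h.apply_eq _).trans ?_
  rw [hin, sum_singleton, hdeg]
  norm_num

lemma apply_A_eq (h : IsPageRank k α π) :
    (1 - α) * π (Fin.last (k + 2)) = α / 3 * π ⟨k + 1, by omega⟩ + (1 - α) / ((k : ℝ) + 3) := by
  have hin : univ.filter (fun j : Fin (k + 3) => PRadj k j (Fin.last (k + 2))) =
      {⟨k + 1, by omega⟩, Fin.last (k + 2)} := by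
    ext j
    simp only [mem_filter, mem_univ, true_and, mem_insert, mem_singleton]
    simp only [PRadj, Fin.ext_iff, Fin.val_last, and_true]
    have := j.isLt; omega
  have hdeg₁ : PRdeg k (k + 1) = 3 := by simp [PRdeg]
  have hdeg₂ : PRdeg k (k + 2) = 1 := by simp [PRdeg]
  have hA := h.apply_eq (Fin.last (k + 2))
  rw [hin, sum_pair (by simp [Fin.ext_iff]), hdeg₁, Fin.val_last, hdeg₂] at hA
  push_cast at hA
  linear_combination hA

lemma apply_B_last_le (h : IsPageRank k α π) (hα₀ : 0 ≤ α) (hα₁ : α ≤ 1) (hk : 1 ≤ k) :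
    π ⟨k + 1, by omega⟩ ≤
      (α / 3) ^ (k - 1) * π ⟨2, by omega⟩ + (1 - α) / ((k : ℝ) + 3) / (1 - α / 3) := by
  let x : ℕ → ℝ := fun m => if hm : m + 2 < k + 3 then π ⟨m + 2, hm⟩ else 0
  have hrec : ∀ m < k - 1, x (m + 1) ≤ α / 3 * x m + (1 - α) / ((k : ℝ) + 3) := fun m hm => by
    simp only [x, dif_pos (by omega : m + 1 + 2 < k + 3), dif_pos (by omega : m + 2 < k + 3)]
    exact (h.apply_succ_eq (v := m + 2) (by omega) (by omega)).le
  have := le_pow_mul_add_div_of_le_mul_add (by positivity) (by linarith)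
    (div_nonneg (sub_nonneg.2 hα₁) (by positivity)) hrec (k - 1) le_rfl
  simpa [x, show k - 1 + 2 = k + 1 by omega] using this

lemma apply_A_le (hk : 2 ≤ k) (h : IsPageRank k (1 - 1 / k) π) :
    π (Fin.last (k + 2)) ≤ k * (1 / 3) ^ k + 3 / 2 / ((k : ℝ) + 3) := by
  set α : ℝ := 1 - 1 / k
  set t : ℝ := (1 - α) / ((k : ℝ) + 3) with ht
  have hk₁ : (1 : ℝ) ≤ k := by norm_cast; omega
  have hα₀ : 0 ≤ α := sub_nonneg.2 (div_le_one_of_le₀ hk₁ (by positivity))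
  have hα₁ : α ≤ 1 := sub_le_self _ (by positivity)
  have hkα : (k : ℝ) * (1 - α) = 1 := by simp only [α]; field_simp; ring
  have hpow : (α / 3) ^ k = α / 3 * (α / 3) ^ (k - 1) := by
    rw [← pow_succ']; congr 1; omega
  have ht₀ : 0 ≤ t := div_nonneg (sub_nonneg.2 hα₁) (by positivity)
  have h3α : (3 : ℝ) - α ≠ 0 := by linarith
  calc π (Fin.last (k + 2)) = k * (α / 3 * π ⟨k + 1, by omega⟩ + t) := by
        linear_combination (k : ℝ) * h.apply_A_eq - π (Fin.last (k + 2)) * hkα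
    _ ≤ k * (α / 3 * ((α / 3) ^ (k - 1) * π ⟨2, by omega⟩ + t / (1 - α / 3)) + t) := by
        gcongr; exact h.apply_B_last_le hα₀ hα₁ (by omega)
    _ = k * ((α / 3) ^ k * π ⟨2, by omega⟩ + t / (1 - α / 3)) := by
        rw [hpow]; field_simp; ring
    _ ≤ k * ((1 / 3) ^ k * 1 + 3 / 2 * t) := by
        gcongr
        · exact h.1 _
        · exact h.le_one _
        · rw [div_le_iff₀ (by linarith)]; nlinarith
    _ = k * (1 / 3) ^ k + 3 / 2 / ((k : ℝ) + 3) := by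
        have hkt : k * t = 1 / ((k : ℝ) + 3) := by rw [ht, ← mul_div_assoc, hkα]
        linear_combination 3 / 2 * hkt

end IsPageRank

/-- If `π k` is the PageRank vector of `Γ(k)` for `α = 1 - 1/k` (for each `k ≥ 2`),
then `π(k)_A → 0` as `k → ∞`. -/
theorem pagerank_A_tendsto_zero (π : ∀ k : ℕ, Fin (k + 3) → ℝ)
    (hπ : ∀ k, 2 ≤ k → IsPageRank k (1 - 1 / (k : ℝ)) (π k)) :
    Filter.Tendsto (fun k : ℕ => π k ⟨k + 2, by omega⟩) Filter.atTop (nhds 0) := by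
  have hbound :
      Tendsto (fun k : ℕ => k * (1 / 3 : ℝ) ^ k + 3 / 2 / ((k : ℝ) + 3)) atTop (nhds 0) := by
    simpa using
      (tendsto_self_mul_const_pow_of_lt_one (r := 1 / 3) (by norm_num) (by norm_num)).add
        (tendsto_const_nhds.div_atTop
          (tendsto_atTop_add_const_right _ 3 tendsto_natCast_atTop_atTop))
  refine tendsto_of_tendsto_of_tendsto_of_le_of_le' tendsto_const_nhds hbound ?_ ?_ <;>
    filter_upwards [eventually_ge_atTop 2] with k hk
  · exact (hπ k hk).1 _
  · exact (hπ k hk).apply_A_le hk
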